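/- Let X be uniform on [0,1] and f(x) = x^{−α} with 0 < α < 1/2. Then there exists an increasing function β : [0,1] → ℝ⁺ such that x/β(x) is bounded, β(x)·ln(x) → 0 as x → 0, and Var(f(X) | X ∈ I) ≤ β(μ(I))/μ(I) for every interval I ⊂ [0,1], where μ is Lebesgue measure. -/
import Mathlib

open MeasureTheory ProbabilityTheory Filter

lemma real_rpow_add_le_add_rpow {a b p : ℝ} (ha : 0 ≤ a) (hb : 0 ≤ b)
    (hp : 0 ≤ p) (hp1 : p ≤ 1) : (a + b) ^ p ≤ a ^ p + b ^ p := by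
  have h := NNReal.rpow_add_le_add_rpow a.toNNReal b.toNNReal hp hp1
  have := NNReal.coe_le_coe.2 h
  push_cast [NNReal.coe_rpow] at this
  rwa [Real.coe_toNNReal _ ha, Real.coe_toNNReal _ hb] at this

/-- Hypothesis (H) of the paper holds for `f(x) = x^{−α}`, `0 < α < 1/2`, and
`X` uniform on `[0,1]`: there is an increasing `β : [0,1] → ℝ⁺` with `x/β(x)`
bounded, `β(x)·ln x → 0` as `x → 0`, and
`Var(f(X) | X ∈ I) ≤ β(μ(I))/μ(I)` for every interval `I ⊆ [0,1]`. -/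
theorem hypothesis_H_for_power
    (α : ℝ) (hα : 0 < α) (hα' : α < 1/2) :
    ∃ β : ℝ → ℝ,
      MonotoneOn β (Set.Icc (0:ℝ) 1) ∧
      (∀ x ∈ Set.Ioc (0:ℝ) 1, 0 < β x) ∧
      (∃ C : ℝ, ∀ x ∈ Set.Ioc (0:ℝ) 1, x / β x ≤ C) ∧
      Tendsto (fun x => β x * Real.log x) (nhdsWithin 0 (Set.Ioi 0)) (nhds 0) ∧
      ∀ I : Set ℝ, I.OrdConnected → MeasurableSet I → I ⊆ Set.Icc (0:ℝ) 1 →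
        variance (fun x => x ^ (-α)) ((volume.restrict (Set.Icc (0:ℝ) 1))[|I])
          ≤ β ((volume I).toReal) / (volume I).toReal := by
  set p : ℝ := 1 - 2 * α with hpdef
  have hp0 : 0 < p := by unfold p; linarith
  have hp1 : p ≤ 1 := by unfold p; linarith
  refine ⟨fun x => x ^ p / p, ?_, ?_, ?_, ?_, ?_⟩
  · -- monotone
    intro x hx y hy hxy
    exact div_le_div_of_nonneg_right (Real.rpow_le_rpow hx.1 hxy hp0.le) hp0.le
  · -- positivity
    intro x hx
    exact div_pos (Real.rpow_pos_of_pos hx.1 p) hp0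
  · -- boundedness of x / β x
    refine ⟨p, fun x hx => ?_⟩
    have hx0 : 0 < x := hx.1
    have hx1 : x / x ^ p = x ^ (1 - p) := by
      rw [Real.rpow_sub hx0 1 p, Real.rpow_one]
    have : x / (x ^ p / p) = p * x ^ (1 - p) := by
      rw [div_div_eq_mul_div, show x * p = p * x from mul_comm x p, mul_div_assoc, hx1]
    rw [this]
    have : x ^ (1 - p) ≤ 1 := Real.rpow_le_one hx0.le hx.2 (by linarith)
    nlinarith
  · -- tendsto
    have h := tendsto_log_mul_rpow_nhdsGT_zero hp0
    have : Tendsto (fun x : ℝ => Real.log x * x ^ p / p) (nhdsWithin 0 (Set.Ioi 0))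
        (nhds (0 / p)) := h.div_const p
    rw [zero_div] at this
    refine this.congr fun x => by ring
  · -- the variance bound
    intro I hIoc hIm hIsub
    set μ0 := volume.restrict (Set.Icc (0:ℝ) 1) with hμ0
    have hμ0I : μ0 I = volume I := by
      rw [hμ0, Measure.restrict_apply hIm, Set.inter_eq_self_of_subset_left hIsub]
    by_cases hI0 : volume I = 0
    · -- degenerate case
      have hr : μ0.restrict I = 0 := by
        rw [Measure.restrict_eq_zero, hμ0I]; exact hI0
      have hcond : μ0[|I] = 0 := by
        rw [ProbabilityTheory.cond, hr, smul_zero]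
      rw [hcond, hI0]
      simp [variance, evariance]
    · have hIfin : volume I ≠ ⊤ := by
        have : volume I ≤ volume (Set.Icc (0:ℝ) 1) := measure_mono hIsub
        rw [Real.volume_Icc] at this
        exact ne_top_of_le_ne_top (by simp) this
      set t : ℝ := (volume I).toReal with htdef
      have ht0 : 0 < t := ENNReal.toReal_pos hI0 hIfin
      -- inf and sup
      have hne : I.Nonempty := Set.nonempty_iff_ne_empty.2 (fun h => hI0 (by simp [h]))
      have hbb : BddBelow I := ⟨0, fun x hx => (hIsub hx).1⟩
      have hba : BddAbove I := ⟨1, fun x hx => (hIsub hx).2⟩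
      set a : ℝ := sInf I with hadef
      set b : ℝ := sSup I with hbdef
      have ha0 : 0 ≤ a := le_csInf hne fun x hx => (hIsub hx).1
      have hIab : I ⊆ Set.Icc a b := fun x hx => ⟨csInf_le hbb hx, le_csSup hba hx⟩
      have hab : a ≤ b := by
        obtain ⟨x, hx⟩ := hne
        exact le_trans (csInf_le hbb hx) (le_csSup hba hx)
      have hIoo : Set.Ioo a b ⊆ I := by
        intro x hx
        obtain ⟨y, hy, hyx⟩ := exists_lt_of_csInf_lt hne hx.1
        obtain ⟨z, hz, hxz⟩ := exists_lt_of_lt_csSup hne hx.2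
        exact hIoc.out hy hz ⟨hyx.le, hxz.le⟩
      have hvol : volume I = ENNReal.ofReal (b - a) := by
        refine le_antisymm ?_ ?_
        · calc volume I ≤ volume (Set.Icc a b) := measure_mono hIab
            _ = ENNReal.ofReal (b - a) := Real.volume_Icc
        · calc ENNReal.ofReal (b - a) = volume (Set.Ioo a b) := Real.volume_Ioo.symm
            _ ≤ volume I := measure_mono hIoo
      have htba : b - a = t := by
        rw [htdef, hvol, ENNReal.toReal_ofReal (by linarith)]
      -- the conditional measure
      have hcond : μ0[|I] = (volume I)⁻¹ • volume.restrict I := by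
        rw [ProbabilityTheory.cond, hμ0I, hμ0, Measure.restrict_restrict hIm,
          Set.inter_eq_self_of_subset_left hIsub]
      haveI : IsFiniteMeasure μ0 := by
        constructor
        rw [hμ0, Measure.restrict_apply MeasurableSet.univ, Set.univ_inter, Real.volume_Icc]
        simp
      haveI hprob : IsProbabilityMeasure (μ0[|I]) :=
        cond_isProbabilityMeasure (by rw [hμ0I]; exact hI0)
      have hmeas : AEStronglyMeasurable (fun x : ℝ => x ^ (-α)) (μ0[|I]) :=
        (measurable_id.pow_const (-α)).aestronglyMeasurable
      have hvarle := variance_le_expectation_sq (μ := μ0[|I]) hmeas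
      -- compute the second moment integral
      have hint : (μ0[|I])[(fun x : ℝ => x ^ (-α)) ^ 2]
          = t⁻¹ * ∫ x in I, (x ^ (-α)) ^ 2 := by
        rw [hcond, integral_smul_measure, ENNReal.toReal_inv, ← htdef, smul_eq_mul]
        simp only [Pi.pow_apply]
      have hsq : ∫ x in I, (x ^ (-α)) ^ 2 = ∫ x in I, x ^ (-(2*α)) := by
        refine setIntegral_congr_fun hIm fun x hx => ?_
        have hx0 : 0 ≤ x := (hIsub hx).1
        rw [sq, ← Real.rpow_add' hx0 (by unfold p at hp0; intro h; nlinarith)]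
        ring_nf
      have hr : (-1 : ℝ) < -(2*α) := by linarith
      have hIntOn : IntegrableOn (fun x : ℝ => x ^ (-(2*α))) (Set.Ioc a b) volume :=
        (intervalIntegral.intervalIntegrable_rpow' hr (a := a) (b := b)).1
      have hle1 : ∫ x in I, x ^ (-(2*α)) ≤ ∫ x in Set.Ioc a b, x ^ (-(2*α)) := by
        refine setIntegral_mono_set hIntOn ?_ ?_
        · refine (ae_restrict_iff' measurableSet_Ioc).2 (ae_of_all _ fun x hx => ?_)
          exact Real.rpow_nonneg (le_trans ha0 hx.1.le) _
        · refine MeasureTheory.ae_le_set.2 (measure_mono_null (t := {a}) (fun x hx => ?_)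
            Real.volume_singleton)
          have h1 := hIab hx.1
          have h2 := hx.2
          simp only [Set.mem_Ioc, not_and_or, not_lt, not_le] at h2
          simp only [Set.mem_singleton_iff]
          rcases h2 with h2 | h2
          · exact le_antisymm h2 h1.1
          · exact absurd h1.2 (not_le.2 h2)
      have hcalc : ∫ x in Set.Ioc a b, x ^ (-(2*α)) = (b ^ p - a ^ p) / p := by
        rw [← intervalIntegral.integral_of_le hab,
          integral_rpow (Or.inl hr)]
        norm_num [hpdef]
        ring_nf
      have hsub : (b ^ p - a ^ p) / p ≤ t ^ p / p := by
        have : b ^ p ≤ a ^ p + (b - a) ^ p := by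
          have h := real_rpow_add_le_add_rpow ha0 (by linarith : (0:ℝ) ≤ b - a) hp0.le hp1
          rwa [show a + (b - a) = b by ring] at h
        rw [← htba]
        have : b ^ p - a ^ p ≤ (b - a) ^ p := by linarith
        exact div_le_div_of_nonneg_right this hp0.le
      calc variance (fun x : ℝ => x ^ (-α)) (μ0[|I])
          ≤ (μ0[|I])[(fun x : ℝ => x ^ (-α)) ^ 2] := hvarle
        _ = t⁻¹ * ∫ x in I, (x ^ (-α)) ^ 2 := hint
        _ = t⁻¹ * ∫ x in I, x ^ (-(2*α)) := by rw [hsq]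
        _ ≤ t⁻¹ * ((b ^ p - a ^ p) / p) := by
            rw [← hcalc]
            exact mul_le_mul_of_nonneg_left hle1 (by positivity)
        _ ≤ t⁻¹ * (t ^ p / p) := mul_le_mul_of_nonneg_left hsub (by positivity)
        _ = t ^ p / p / t := by ring
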